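/- arXiv:1608.08424 — 5 statements merged into one kernel-verified Lean document; each statement's English description precedes it below -/
import Mathlib

section
/- Let d ≥ 3 be a natural number, let x* be the unique solution of 1 − (1 − x/2)^d = x in the interval (0, 1], and set c = 1 − x*/2. Then c^{d−1} < 2/d. -/
/-!
Since `c ^ d = 2 * c - 1` and `c ^ (d - 1) = 2 - 1 / c`, the claim is equivalent to
`c < t₀ := d / (2 * (d - 1))`. The convex function `t ↦ t ^ d - (2 * t - 1)` vanishes at `c`
and at `1 > c`, so `c` lies below every `t ≥ 0` where it is negative. It is negative
at `t₀`: with `n = d - 1`, this reduces to `(n + 1) * (1 + 1 / n) ^ n < 2 ^ (n + 1)`, which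
follows from `(1 + 1 / n) ^ n ≤ e < 3`.
-/

open Real Set

lemma convexOn_pow_sub_two_mul (d : ℕ) :
    ConvexOn ℝ (Ici 0) (fun t : ℝ => t ^ d - (2 * t - 1)) := by
  have hlin : ConcaveOn ℝ (Ici 0) (fun t : ℝ => 2 * t - 1) :=
    ((concaveOn_id (convex_Ici 0)).smul zero_le_two).sub (convexOn_const 1 (convex_Ici 0))
  exact (convexOn_pow d).sub hlin

lemma lt_of_pow_lt_two_mul_sub_one {d : ℕ} {t c : ℝ} (ht : 0 ≤ t) (htd : t ^ d < 2 * t - 1)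
    (hc1 : c < 1) (hcd : c ^ d = 2 * c - 1) : c < t := by
  by_contra! htc
  have hct : c ≠ t := by rintro rfl; linarith
  have hseg : c ∈ openSegment ℝ t 1 := by
    rw [openSegment_eq_Ioo (htc.trans_lt hc1)]; exact ⟨lt_of_le_of_ne htc hct.symm, hc1⟩
  have := (convexOn_pow_sub_two_mul d).lt_right_of_left_lt ht (mem_Ici.2 zero_le_one) hseg
    (by linarith)
  simp only [one_pow] at this
  linarith

lemma three_mul_le_two_pow {n : ℕ} (hn : 4 ≤ n) : 3 * n ≤ 2 ^ n := by
  induction n, hn using Nat.le_induction with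
  | base => norm_num
  | succ n hn ih => rw [pow_succ]; omega

lemma succ_mul_one_add_inv_pow_lt_two_pow {n : ℕ} (hn : 2 ≤ n) :
    (n + 1) * (1 + (n : ℝ)⁻¹) ^ n < 2 ^ (n + 1) := by
  rcases hn.eq_or_lt with rfl | hn
  · norm_num
  have hexp : (1 + (n : ℝ)⁻¹) ^ n < 3 :=
    one_add_inv_pow_le_exp.trans_lt (exp_one_lt_d9.trans (by norm_num))
  have h2pow : (3 * (n + 1) : ℝ) ≤ 2 ^ (n + 1) := by
    exact_mod_cast three_mul_le_two_pow (n := n + 1) (by omega)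
  calc (n + 1) * (1 + (n : ℝ)⁻¹) ^ n < (n + 1) * 3 := by gcongr
    _ ≤ 2 ^ (n + 1) := by linarith

lemma pow_succ_lt_two_mul_sub_one {n : ℕ} (hn : 2 ≤ n) :
    (((n : ℝ) + 1) / (2 * n)) ^ (n + 1) < 2 * (((n : ℝ) + 1) / (2 * n)) - 1 := by
  have key := succ_mul_one_add_inv_pow_lt_two_pow hn
  have e1 : ((n : ℝ) + 1) / (2 * n) = (1 + (n : ℝ)⁻¹) / 2 := by field_simp
  have e2 : 2 * (((n : ℝ) + 1) / (2 * n)) - 1 = (n : ℝ)⁻¹ := by field_simp; ring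
  calc (((n : ℝ) + 1) / (2 * n)) ^ (n + 1)
      = (n + 1) * (1 + (n : ℝ)⁻¹) ^ n / 2 ^ (n + 1) * (n : ℝ)⁻¹ := by
        rw [e1, div_pow, pow_succ]; field_simp
    _ < 1 * (n : ℝ)⁻¹ := by gcongr; rwa [div_lt_one (by positivity)]
    _ = _ := by rw [one_mul, e2]

/-- **Lemma 2.2.** With `x*` the unique solution of `1-(1-x/2)^d = x` in `(0,1]`
and `c = 1 - x*/2`, one has `c^{d-1} < 2/d` for `d ≥ 3`. -/
theorem c_pow_lt (d : ℕ) (hd : 3 ≤ d) (xstar c : ℝ)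
    (hx0 : 0 < xstar) (hx1 : xstar ≤ 1)
    (hxeq : 1 - (1 - xstar / 2) ^ d = xstar)
    (hc : c = 1 - xstar / 2) :
    c ^ (d - 1) < 2 / d := by
  obtain ⟨n, rfl⟩ : ∃ n, d = n + 1 := ⟨d - 1, by omega⟩
  have hn : 2 ≤ n := by omega
  rw [← hc] at hxeq
  have hc_pos : 0 < c := by linarith
  have hcd : c ^ (n + 1) = 2 * c - 1 := by linarith
  have hct : c < (n + 1) / (2 * n) :=
    lt_of_pow_lt_two_mul_sub_one (by positivity) (pow_succ_lt_two_mul_sub_one hn) (by linarith) hcd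
  rw [lt_div_iff₀ (by positivity)] at hct
  rw [Nat.add_sub_cancel, Nat.cast_succ, lt_div_iff₀ (by positivity)]
  refine lt_of_mul_lt_mul_left ?_ hc_pos.le
  calc c * (c ^ n * (n + 1)) = (2 * c - 1) * (n + 1) := by rw [← hcd]; ring
    _ < c * 2 := by linarith
end

section
/- For every natural number d ≥ 3 there exists exactly one real number x in the interval (0, 1] satisfying 1 − (1 − x/2)^d = x, and moreover this solution lies in the open interval (0, 1). -/
/-!
With `t = 1 - x / 2` the equation becomes `t ^ d = 2 * t - 1`, i.e. the strictly convex curve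
`t ^ d` meets the line `2 * t - 1`. They already meet at `t = 1` (that is, `x = 0`), and a strictly
convex function agrees with an affine one at no more than two points, so there is at most one
solution with `x ∈ (0, 1]`. Existence follows from the intermediate value theorem on `[2/5, 1]`,
and `x = 1` is excluded because `(1/2) ^ d ≠ 0`.
-/

open Set

theorem StrictConvexOn.not_eq_affine_of_lt_of_lt {𝕜 : Type*} [Field 𝕜] [LinearOrder 𝕜]
    [IsStrictOrderedRing 𝕜] {s : Set 𝕜} {f : 𝕜 → 𝕜} (hf : StrictConvexOn 𝕜 s f)
    {a b x y z : 𝕜} (hx : x ∈ s) (hz : z ∈ s) (hxy : x < y) (hyz : y < z)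
    (hfx : f x = a * x + b) (hfy : f y = a * y + b) (hfz : f z = a * z + b) : False := by
  have hslope := hf.slope_strict_mono_adjacent hx hz hxy hyz
  rw [hfx, hfy, hfz] at hslope
  have hxy' : y - x ≠ 0 := sub_ne_zero.2 hxy.ne'
  have hyz' : z - y ≠ 0 := sub_ne_zero.2 hyz.ne'
  have hleft : (a * y + b - (a * x + b)) / (y - x) = a := by field_simp; ring
  have hright : (a * z + b - (a * y + b)) / (z - y) = a := by field_simp; ring
  exact (hleft ▸ hright ▸ hslope).false

theorem eq_of_pow_eq_two_mul_sub_one {d : ℕ} (hd : 2 ≤ d) {s t : ℝ} (hs : s ∈ Ico 0 1)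
    (ht : t ∈ Ico 0 1) (hsd : s ^ d = 2 * s - 1) (htd : t ^ d = 2 * t - 1) : s = t := by
  have hconv := strictConvexOn_pow hd
  have h1 : (1 : ℝ) ^ d = 2 * 1 - 1 := by norm_num
  rcases lt_trichotomy s t with hst | rfl | hts
  · exact (hconv.not_eq_affine_of_lt_of_lt hs.1 (mem_Ici.2 zero_le_one) hst ht.2 hsd htd h1).elim
  · rfl
  · exact (hconv.not_eq_affine_of_lt_of_lt ht.1 (mem_Ici.2 zero_le_one) hts hs.2 htd hsd h1).elim

theorem exists_mem_Ioo_one_sub_one_sub_half_pow_eq_self {d : ℕ} (hd : 3 ≤ d) :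
    ∃ x ∈ Ioo (2 / 5 : ℝ) 1, 1 - (1 - x / 2) ^ d = x := by
  set g : ℝ → ℝ := fun x => 1 - (1 - x / 2) ^ d - x
  have hg : ContinuousOn g (Icc (2 / 5) 1) := by fun_prop
  have hg_one : g 1 < 0 := by norm_num [g]
  have hg_two_fifths : 0 < g (2 / 5) := by
    have : (4 / 5 : ℝ) ^ d ≤ (4 / 5) ^ 3 := pow_le_pow_of_le_one (by norm_num) (by norm_num) hd
    norm_num [g] at this ⊢
    linarith
  obtain ⟨x, hx, hgx⟩ :=
    intermediate_value_Ioo' (by norm_num) hg ⟨hg_one, hg_two_fifths⟩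
  exact ⟨x, hx, by linarith [show g x = 0 from hgx]⟩

/-- For every `d ≥ 3`, the equation `1-(1-x/2)^d = x` has exactly one solution in
`(0,1]`, and this solution lies in the open interval `(0,1)`. -/
theorem exists_unique_fixed_point (d : ℕ) (hd : 3 ≤ d) :
    (∃! x : ℝ, x ∈ Set.Ioc (0 : ℝ) 1 ∧ 1 - (1 - x / 2) ^ d = x) ∧
    (∀ x : ℝ, x ∈ Set.Ioc (0 : ℝ) 1 → 1 - (1 - x / 2) ^ d = x → x < 1) := by
  obtain ⟨x, hx, hfx⟩ := exists_mem_Ioo_one_sub_one_sub_half_pow_eq_self hd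
  refine ⟨⟨x, ⟨⟨by linarith [hx.1], hx.2.le⟩, hfx⟩, ?_⟩, ?_⟩
  · rintro y ⟨hy, hfy⟩
    have hyx : 1 - y / 2 = 1 - x / 2 :=
      eq_of_pow_eq_two_mul_sub_one (d := d) (by omega)
        ⟨by linarith [hy.2], by linarith [hy.1]⟩ ⟨by linarith [hx.2], by linarith [hx.1]⟩
        (by linarith) (by linarith)
    linarith
  · intro y hy hfy
    refine hy.2.lt_of_ne fun hy1 => ?_
    subst hy1
    norm_num at hfy
end

section
/- Let d ≥ 3 be a natural number and let x* be the unique solution of 1 − (1 − x/2)^d = x in the interval (0, 1]. Then x* > 1 − 1/d. -/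
lemma pow23_lt (d : ℕ) (hd : 3 ≤ d) : (2/3 : ℝ)^d < 1/d := by
  induction d, hd using Nat.le_induction with
  | base => norm_num
  | succ n hn ih =>
    have hn' : (3:ℝ) ≤ n := by exact_mod_cast hn
    have h2 : (2/3:ℝ) * (2/3)^n < (2/3) * (1/n) :=
      mul_lt_mul_of_pos_left ih (by norm_num)
    have h3 : (2/3:ℝ) * (1/n) ≤ 1/(n+1) := by
      rw [mul_one_div, div_le_div_iff₀ (by positivity) (by positivity)]
      nlinarith
    have : (2/3:ℝ)^(n+1) = (2/3) * (2/3)^n := by ring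
    push_cast
    linarith

/-- For `d ≥ 3`, the unique solution `x*` of `1-(1-x/2)^d = x` in `(0,1]` satisfies
`x* > 1 - 1/d`. -/
theorem xstar_gt (d : ℕ) (hd : 3 ≤ d) (xstar : ℝ)
    (hx0 : 0 < xstar) (hx1 : xstar ≤ 1)
    (hxeq : 1 - (1 - xstar / 2) ^ d = xstar) :
    1 - 1 / (d : ℝ) < xstar := by
  by_contra hcon
  push_neg at hcon
  have hD : (3:ℝ) ≤ d := by exact_mod_cast hd
  have hD0 : (0:ℝ) < d := by linarith
  have hden : (0:ℝ) < 1 - 1/(d:ℝ) := by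
    rw [sub_pos, div_lt_one hD0]; linarith
  set a : ℝ := xstar / (1 - 1/(d:ℝ)) with ha_def
  have ha0 : 0 < a := div_pos hx0 hden
  have ha1 : a ≤ 1 := by
    rw [ha_def, div_le_one hden]; linarith
  have hb0 : (0:ℝ) ≤ 1 - a := by linarith
  have hx : ((1 + 1/(d:ℝ))/2) ∈ Set.Ici (0:ℝ) := by
    simp only [Set.mem_Ici]; positivity
  have hy : (1:ℝ) ∈ Set.Ici (0:ℝ) := by norm_num
  have hconv := (convexOn_pow d).2 hx hy (le_of_lt ha0) hb0 (by ring)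
  simp only [smul_eq_mul, one_pow, mul_one] at hconv
  have hA : a * (1 - 1/(d:ℝ)) = xstar := div_mul_cancel₀ xstar hden.ne'
  have hcomb : a * ((1 + 1/(d:ℝ))/2) + (1-a) = 1 - xstar/2 := by
    linear_combination (-1/2 : ℝ) * hA
  rw [hcomb] at hconv
  -- hconv : (1 - xstar/2)^d ≤ a * ((1+1/d)/2)^d + (1-a)
  have hkey : ((1+1/(d:ℝ))/2)^d < 1/d := by
    have hle : ((1+1/(d:ℝ))/2) ≤ 2/3 := by
      have : 1/(d:ℝ) ≤ 1/3 := by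
        rw [div_le_div_iff₀ hD0 (by norm_num)]; linarith
      linarith
    calc ((1+1/(d:ℝ))/2)^d ≤ (2/3:ℝ)^d := by
          apply pow_le_pow_left₀ (by positivity) hle
      _ < 1/d := pow23_lt d hd
  have hval : (1 - xstar/2)^d = 1 - xstar := by linarith
  have h1 : a * ((1+1/(d:ℝ))/2)^d < a * (1/d) :=
    mul_lt_mul_of_pos_left hkey ha0
  have h2 : a * (1/(d:ℝ)) + (1-a) = 1 - xstar := by
    linear_combination (-1 : ℝ) * hA
  linarith
end

section
/- Let d ≥ 3 be a natural number, let x* be the unique solution of 1 − (1 − x/2)^d = x in (0, 1], and set c = 1 − x*/2. Then there exist δ > 0 and β > 0 such that for all real x, y with 0 ≤ y ≤ c + δ and 0 ≤ x ≤ 2y one has f(x, y) ≤ 1 − β. -/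
noncomputable section

/-- `f(x,y) = (1/2) Σ_{i=0}^{d-1} y^{d-i-1} (y - x/2)^i`. -/
def f (d : ℕ) (x y : ℝ) : ℝ :=
  (1 / 2) * ∑ i ∈ Finset.range d, y ^ (d - i - 1) * (y - x / 2) ^ i

/-- There exist `δ > 0` and `β > 0` such that `f(x,y) ≤ 1 - β` whenever
`0 ≤ y ≤ c + δ` and `0 ≤ x ≤ 2y`, where `c = 1 - x*/2` and `x*` is the unique
solution of `1-(1-x/2)^d = x` in `(0,1]`, `d ≥ 3`. -/
theorem f_le_one_sub_beta (d : ℕ) (hd : 3 ≤ d) (xstar c : ℝ)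
    (hx0 : 0 < xstar) (hx1 : xstar ≤ 1)
    (hxeq : 1 - (1 - xstar / 2) ^ d = xstar)
    (hc : c = 1 - xstar / 2) :
    ∃ δ : ℝ, 0 < δ ∧ ∃ β : ℝ, 0 < β ∧
      ∀ x y : ℝ, 0 ≤ y → y ≤ c + δ → 0 ≤ x → x ≤ 2 * y →
        f d x y ≤ 1 - β := by
  have hc1 : c < 1 := by rw [hc]; linarith
  have hc0 : (0:ℝ) < c := by rw [hc]; linarith
  have hcd : c ^ d = 2 * c - 1 := by
    rw [hc]; nlinarith [hxeq]
  have hsum : ∑ i ∈ Finset.range d, c ^ i = 2 := by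
    rw [geom_sum_eq (ne_of_lt hc1), hcd,
      div_eq_iff (sub_ne_zero.mpr (ne_of_lt hc1))]
    ring
  have key : (d : ℝ) * c ^ (d - 1) < 2 := by
    have heq : (d : ℝ) * c ^ (d - 1) = ∑ _i ∈ Finset.range d, c ^ (d - 1) := by
      rw [Finset.sum_const, Finset.card_range, nsmul_eq_mul]
    rw [heq, ← hsum]
    apply Finset.sum_lt_sum
    · intro i hi
      exact pow_le_pow_of_le_one hc0.le hc1.le (by
        have := Finset.mem_range.mp hi; omega)
    · refine ⟨0, Finset.mem_range.mpr (by omega), ?_⟩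
      simpa using pow_lt_one₀ hc0.le hc1 (by omega)
  -- continuity: pick δ with d*(c+δ)^(d-1)/2 < 1
  have hcont : ContinuousAt (fun t : ℝ => (d : ℝ) * t ^ (d - 1) / 2) c := by
    fun_prop
  have hlt : (d : ℝ) * c ^ (d - 1) / 2 < 1 := by linarith
  have hnhds : ∀ᶠ t in nhds c, (d : ℝ) * t ^ (d - 1) / 2 < 1 :=
    hcont.eventually_lt continuousAt_const hlt
  obtain ⟨ε, hε, hball⟩ := Metric.eventually_nhds_iff.mp hnhds
  refine ⟨ε / 2, by positivity, 1 - (d : ℝ) * (c + ε / 2) ^ (d - 1) / 2, ?_, ?_⟩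
  · have : (d : ℝ) * (c + ε / 2) ^ (d - 1) / 2 < 1 := by
      apply hball
      simp only [Real.dist_eq, add_sub_cancel_left]
      rw [abs_of_pos (by positivity)]
      linarith
    linarith
  · intro x y hy0 hyle hx0' hxle
    have hterm : ∀ i ∈ Finset.range d,
        y ^ (d - i - 1) * (y - x / 2) ^ i ≤ y ^ (d - 1) := by
      intro i hi
      have hi' := Finset.mem_range.mp hi
      have h1 : (0:ℝ) ≤ y - x / 2 := by linarith
      have h2 : y - x / 2 ≤ y := by linarith
      calc y ^ (d - i - 1) * (y - x / 2) ^ i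
          ≤ y ^ (d - i - 1) * y ^ i := by
            apply mul_le_mul_of_nonneg_left (pow_le_pow_left₀ h1 h2 i)
              (pow_nonneg hy0 _)
        _ = y ^ (d - 1) := by rw [← pow_add]; congr 1; omega
    have hfb : f d x y ≤ (d : ℝ) * y ^ (d - 1) / 2 := by
      unfold f
      have := Finset.sum_le_sum hterm
      rw [Finset.sum_const, Finset.card_range, nsmul_eq_mul] at this
      linarith
    have hyc : y ^ (d - 1) ≤ (c + ε / 2) ^ (d - 1) :=
      pow_le_pow_left₀ hy0 hyle _
    have : (d : ℝ) * y ^ (d - 1) / 2 ≤ (d : ℝ) * (c + ε / 2) ^ (d - 1) / 2 := by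
      have hd0 : (0:ℝ) ≤ d := by positivity
      nlinarith
    linarith

end
end

section
/- Let (A_n, B_n)_{n ≥ n_0} be a process on pairs of positive integers, adapted to a filtration (F_n), with deterministic start (A_{n_0}, B_{n_0}) = (a, b), such that almost surely (A_{n+1}, B_{n+1}) ∈ {(A_n + 1, B_n), (A_n, B_n + 1)} and P(A_{n+1} = A_n + 1 | F_n) = A_n/(A_n + B_n) for every n ≥ n_0. Then almost surely the set {n ≥ n_0 : A_n = B_n} is finite. -/
open MeasureTheory ProbabilityTheory Filter
open scoped Nat

/-!
The density `φ(A, B)` of the Beta(A, B) law at `1/2` is harmonic for the urn: it is the posterior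
density at `1/2` of the limiting fraction of the urn given its current counts. Hence `φ(Aₙ, Bₙ)`
is a nonnegative martingale and is almost surely bounded. But `φ(k, k)` grows like `√k`, and at a
diagonal visit at time `n` we have `Aₙ = Bₙ = (a + b + n - n₀) / 2`, so infinitely many diagonal
visits would make the martingale unbounded.
-/

/-- `betaHalf p q` is the density of Beta(p + 1, q + 1) at `1/2`. -/
noncomputable def betaHalf (p q : ℕ) : ℝ := (p + q + 1)! / (p ! * q ! * 2 ^ (p + q))

lemma betaHalf_nonneg (p q : ℕ) : 0 ≤ betaHalf p q := by
  unfold betaHalf; positivity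

def IsPolyaHarmonic (g : ℕ → ℕ → ℝ) : Prop :=
  ∀ A B : ℕ, 0 < A → 0 < B →
    g A B = A / (A + B) * g (A + 1) B + B / (A + B) * g A (B + 1)

lemma isPolyaHarmonic_betaHalf : IsPolyaHarmonic fun A B => betaHalf (A - 1) (B - 1) := by
  intro A B hA hB
  obtain ⟨p, rfl⟩ := Nat.exists_eq_add_one_of_ne_zero hA.ne'
  obtain ⟨q, rfl⟩ := Nat.exists_eq_add_one_of_ne_zero hB.ne'
  simp only [betaHalf, Nat.add_sub_cancel, Nat.cast_add, Nat.cast_one,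
    show p + 1 + q = p + q + 1 by ring, show p + (q + 1) = p + q + 1 by ring,
    Nat.factorial_succ, pow_succ]
  push_cast
  field_simp
  ring

lemma betaHalf_succ_diag (k : ℕ) :
    betaHalf (k + 1) (k + 1) = betaHalf k k * ((2 * k + 3) / (2 * k + 2)) := by
  simp only [betaHalf, show k + 1 + (k + 1) = k + k + 1 + 1 by ring, Nat.factorial_succ, pow_succ]
  push_cast
  field_simp
  ring

lemma succ_le_betaHalf_diag_sq (k : ℕ) : (k + 1 : ℝ) ≤ betaHalf k k ^ 2 := by
  induction k with
  | zero => simp [betaHalf]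
  | succ k ih =>
    rw [betaHalf_succ_diag, mul_pow, div_pow, mul_div_assoc', le_div_iff₀ (by positivity)]
    push_cast
    -- `(2k + 3)² ≥ 4 (k + 1) (k + 2)`
    nlinarith

lemma tendsto_betaHalf_diag : Tendsto (fun k => betaHalf k k) atTop atTop := by
  refine tendsto_atTop_mono (fun k => ?_)
    (Real.tendsto_sqrt_atTop.comp (tendsto_atTop_add_const_right _ 1 tendsto_natCast_atTop_atTop))
  exact Real.sqrt_le_iff.2 ⟨betaHalf_nonneg k k, succ_le_betaHalf_diag_sq k⟩

def IsUpRightPath (n₀ : ℕ) (x y : ℕ → ℕ) : Prop :=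
  ∀ n, n₀ ≤ n → (x (n + 1) = x n + 1 ∧ y (n + 1) = y n) ∨ (x (n + 1) = x n ∧ y (n + 1) = y n + 1)

namespace IsUpRightPath

variable {n₀ : ℕ} {x y : ℕ → ℕ}

lemma add_eq (h : IsUpRightPath n₀ x y) {n : ℕ} (hn : n₀ ≤ n) :
    x n + y n = x n₀ + y n₀ + (n - n₀) := by
  induction n, hn using Nat.le_induction with
  | base => omega
  | succ n hn ih => rcases h n hn with ⟨h1, h2⟩ | ⟨h1, h2⟩ <;> omega

lemma start_le (h : IsUpRightPath n₀ x y) {n : ℕ} (hn : n₀ ≤ n) : x n₀ ≤ x n ∧ y n₀ ≤ y n := by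
  induction n, hn using Nat.le_induction with
  | base => omega
  | succ n hn ih => rcases h n hn with ⟨h1, h2⟩ | ⟨h1, h2⟩ <;> omega

lemma finite_diag_of_bddAbove {g : ℕ → ℕ → ℝ} (hg : Tendsto (fun k => g k k) atTop atTop)
    (h : IsUpRightPath n₀ x y) (hbdd : BddAbove (Set.range fun k => g (x (n₀ + k)) (y (n₀ + k)))) :
    {n | n₀ ≤ n ∧ x n = y n}.Finite := by
  obtain ⟨C, hC⟩ := hbdd
  obtain ⟨K, hK⟩ := eventually_atTop.1 (hg.eventually_gt_atTop C)
  refine (Set.finite_Iio (n₀ + 2 * K)).subset fun n ⟨hn, hxy⟩ => Set.mem_Iio.2 ?_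
  by_contra! hlarge
  have hsum := h.add_eq hn
  have hKx : K ≤ x n := by omega
  have : g (x n) (y n) ≤ C := hC ⟨n - n₀, by simp only [Nat.add_sub_cancel' hn]⟩
  exact (hK _ hKx).not_ge (hxy ▸ this)

end IsUpRightPath

section

variable {Ω : Type*} {m mΩ : MeasurableSpace Ω} {μ : Measure Ω}

lemma integrable_comp_of_ae_add_le [IsFiniteMeasure μ] {A B : Ω → ℕ} (hA : Measurable A)
    (hB : Measurable B) (G : ℕ → ℕ → ℝ) {N : ℕ} (hN : ∀ᵐ ω ∂μ, A ω + B ω ≤ N) :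
    Integrable (fun ω => G (A ω) (B ω)) μ := by
  refine Integrable.of_bound ((measurable_of_countable fun p : ℕ × ℕ => G p.1 p.2).comp
    (hA.prodMk hB)).aestronglyMeasurable
    (∑ p ∈ Finset.range (N + 1) ×ˢ Finset.range (N + 1), ‖G p.1 p.2‖) ?_
  filter_upwards [hN] with ω hω
  exact Finset.single_le_sum (f := fun p : ℕ × ℕ => ‖G p.1 p.2‖) (fun _ _ => norm_nonneg _)
    (a := (A ω, B ω))
    (Finset.mem_product.2 ⟨Finset.mem_range.2 (by omega), Finset.mem_range.2 (by omega)⟩)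

lemma condExp_add_mul_ae_eq (hm : m ≤ mΩ) [SigmaFinite (μ.trim hm)]
    {c d X : Ω → ℝ} (hc : StronglyMeasurable[m] c) (hd : StronglyMeasurable[m] d)
    (hci : Integrable c μ) (hdX : Integrable (d * X) μ) (hX : Integrable X μ) :
    μ[c + d * X | m] =ᵐ[μ] c + d * μ[X | m] := by
  refine (condExp_add hci hdX m).trans ?_
  rw [condExp_of_stronglyMeasurable hm hc hci]
  exact EventuallyEq.rfl.add (condExp_mul_of_stronglyMeasurable_left hd hdX hX)

theorem condExp_polyaHarmonic_step [IsFiniteMeasure μ] (hm : m ≤ mΩ) {A B A' B' : Ω → ℕ}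
    (hA : Measurable[m] A) (hB : Measurable[m] B) (hA' : Measurable A') {g : ℕ → ℕ → ℝ}
    (hg : IsPolyaHarmonic g) {N : ℕ} (hAB : ∀ᵐ ω ∂μ, 0 < A ω ∧ 0 < B ω ∧ A ω + B ω ≤ N)
    (hstep : ∀ᵐ ω ∂μ, (A' ω = A ω + 1 ∧ B' ω = B ω) ∨ (A' ω = A ω ∧ B' ω = B ω + 1))
    (hlaw : μ[fun ω => if A' ω = A ω + 1 then (1 : ℝ) else 0 | m]
      =ᵐ[μ] fun ω => (A ω : ℝ) / ((A ω : ℝ) + (B ω : ℝ))) :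
    μ[fun ω => g (A' ω) (B' ω) | m] =ᵐ[μ] fun ω => g (A ω) (B ω) := by
  set X : Ω → ℝ := fun ω => if A' ω = A ω + 1 then 1 else 0
  set c : Ω → ℝ := fun ω => g (A ω) (B ω + 1)
  set d : Ω → ℝ := fun ω => g (A ω + 1) (B ω) - g (A ω) (B ω + 1)
  have hmeas (G : ℕ → ℕ → ℝ) : StronglyMeasurable[m] fun ω => G (A ω) (B ω) :=
    ((measurable_of_countable fun p : ℕ × ℕ => G p.1 p.2).comp (hA.prodMk hB)).stronglyMeasurable
  have hint (G : ℕ → ℕ → ℝ) : Integrable (fun ω => G (A ω) (B ω)) μ :=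
    integrable_comp_of_ae_add_le (hA.mono hm le_rfl) (hB.mono hm le_rfl) G
      (hAB.mono fun _ h => h.2.2)
  have hX_meas : Measurable X :=
    Measurable.ite (measurableSet_eq_fun hA' ((hA.mono hm le_rfl).add_const 1))
      measurable_const measurable_const
  have hX_le (ω : Ω) : ‖X ω‖ ≤ 1 := by
    simp only [X]; split_ifs <;> simp
  have hX_int : Integrable X μ :=
    .of_bound hX_meas.aestronglyMeasurable 1 (.of_forall hX_le)
  have hdecomp : (fun ω => g (A' ω) (B' ω)) =ᵐ[μ] c + d * X := by
    filter_upwards [hstep] with ω hω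
    rcases hω with ⟨h1, h2⟩ | ⟨h1, h2⟩ <;> simp [c, d, X, h1, h2]
  calc μ[fun ω => g (A' ω) (B' ω) | m]
      =ᵐ[μ] μ[c + d * X | m] := condExp_congr_ae hdecomp
    _ =ᵐ[μ] c + d * μ[X | m] :=
        condExp_add_mul_ae_eq hm (hmeas fun x y => g x (y + 1))
          (hmeas fun x y => g (x + 1) y - g x (y + 1)) (hint fun x y => g x (y + 1))
          ((hint fun x y => g (x + 1) y - g x (y + 1)).mul_bdd hX_meas.aestronglyMeasurable
            (.of_forall hX_le)) hX_int
    _ =ᵐ[μ] c + d * fun ω => (A ω : ℝ) / ((A ω : ℝ) + (B ω : ℝ)) :=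
        EventuallyEq.rfl.add (EventuallyEq.rfl.mul hlaw)
    _ =ᵐ[μ] fun ω => g (A ω) (B ω) := by
        filter_upwards [hAB] with ω ⟨hA0, hB0, _⟩
        have hpos : (0 : ℝ) < A ω + B ω := by positivity
        rw [hg _ _ hA0 hB0]
        simp only [c, d, Pi.add_apply, Pi.mul_apply]
        field_simp
        ring

def MeasureTheory.Filtration.shift (F : Filtration ℕ mΩ) (n₀ : ℕ) : Filtration ℕ mΩ where
  seq n := F (n₀ + n)
  mono' _ _ hij := F.mono (by omega)
  le' _ := F.le _

theorem martingale_polyaHarmonic [IsFiniteMeasure μ] {F : Filtration ℕ mΩ} {A B : ℕ → Ω → ℕ}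
    {n₀ a b : ℕ} (ha : 0 < a) (hb : 0 < b) (hstart : ∀ ω, A n₀ ω = a ∧ B n₀ ω = b)
    (hA : ∀ n, Measurable[F n] (A n)) (hB : ∀ n, Measurable[F n] (B n))
    (hpath : ∀ᵐ ω ∂μ, IsUpRightPath n₀ (A · ω) (B · ω))
    (hlaw : ∀ n, n₀ ≤ n → μ[fun ω => if A (n + 1) ω = A n ω + 1 then (1 : ℝ) else 0 | F n]
      =ᵐ[μ] fun ω => (A n ω : ℝ) / ((A n ω : ℝ) + (B n ω : ℝ)))
    {g : ℕ → ℕ → ℝ} (hg : IsPolyaHarmonic g) :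
    Martingale (fun k ω => g (A (n₀ + k) ω) (B (n₀ + k) ω)) (F.shift n₀) μ := by
  have hAB (k : ℕ) : ∀ᵐ ω ∂μ,
      0 < A (n₀ + k) ω ∧ 0 < B (n₀ + k) ω ∧ A (n₀ + k) ω + B (n₀ + k) ω ≤ a + b + k := by
    filter_upwards [hpath] with ω hω
    have hle := hω.start_le (Nat.le_add_right n₀ k)
    have hsum := hω.add_eq (Nat.le_add_right n₀ k)
    simp only [hstart ω] at hle hsum
    omega
  refine martingale_nat (fun k => ?_) (fun k => ?_) (fun k => ?_)
  · exact ((measurable_of_countable fun p : ℕ × ℕ => g p.1 p.2).comp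
      ((hA _).prodMk (hB _))).stronglyMeasurable
  · exact integrable_comp_of_ae_add_le ((hA _).mono (F.le _) le_rfl)
      ((hB _).mono (F.le _) le_rfl) g ((hAB k).mono fun _ h => h.2.2)
  · exact (condExp_polyaHarmonic_step (F.le _) (hA _) (hB _) ((hA _).mono (F.le _) le_rfl) hg
      (hAB k) (hpath.mono fun ω hω => hω _ (Nat.le_add_right n₀ k))
      (hlaw _ (Nat.le_add_right n₀ k))).symm

theorem MeasureTheory.Martingale.ae_bddAbove_range_of_nonneg [IsFiniteMeasure μ]
    {ℱ : Filtration ℕ mΩ} {f : ℕ → Ω → ℝ} (hf : Martingale f ℱ μ) (hnonneg : ∀ n ω, 0 ≤ f n ω) :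
    ∀ᵐ ω ∂μ, BddAbove (Set.range fun n => f n ω) := by
  have hL1 (n : ℕ) : eLpNorm (f n) 1 μ = ENNReal.ofReal (∫ ω, f 0 ω ∂μ) := by
    rw [eLpNorm_one_eq_lintegral_enorm,
      ← ofReal_integral_norm_eq_lintegral_enorm (hf.integrable n)]
    congr 1
    calc ∫ ω, ‖f n ω‖ ∂μ = ∫ ω, f n ω ∂μ :=
          integral_congr_ae (.of_forall fun ω => Real.norm_of_nonneg (hnonneg n ω))
      _ = ∫ ω, (μ[f n | ℱ 0]) ω ∂μ := (integral_condExp (ℱ.le 0)).symm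
      _ = ∫ ω, f 0 ω ∂μ := integral_congr_ae (hf.condExp_ae_eq (Nat.zero_le n))
  filter_upwards [hf.submartingale.ae_tendsto_limitProcess fun n => (hL1 n).le] with ω hω
  exact hω.bddAbove_range

end

/-- **Pólya-urn walk.** Let `(Aₙ, Bₙ)` be a walk on pairs of positive integers,
started from `(a, b)`, which at each step `n ≥ n₀` moves one step right or one step
up with conditional probabilities `Aₙ/(Aₙ+Bₙ)` and `Bₙ/(Aₙ+Bₙ)` given `F n`.
Then almost surely `Aₙ = Bₙ` for only finitely many `n ≥ n₀`. -/
theorem polya_walk_equal_finitely_often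
    {Ω : Type} {mΩ : MeasurableSpace Ω} (μ : @Measure Ω mΩ)
    (hprob : IsProbabilityMeasure μ)
    (n₀ : ℕ) (F : @Filtration Ω ℕ _ mΩ)
    (A B : ℕ → Ω → ℕ) (a b : ℕ) (ha : 0 < a) (hb : 0 < b)
    (hstart : ∀ ω, A n₀ ω = a ∧ B n₀ ω = b)
    (hA_adapted : ∀ n, Measurable[F n] (A n))
    (hB_adapted : ∀ n, Measurable[F n] (B n))
    (hstep : ∀ᵐ ω ∂μ, ∀ n, n₀ ≤ n →
      (A (n + 1) ω = A n ω + 1 ∧ B (n + 1) ω = B n ω) ∨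
      (A (n + 1) ω = A n ω ∧ B (n + 1) ω = B n ω + 1))
    (hlaw : ∀ n, n₀ ≤ n →
      MeasureTheory.condExp (α := Ω) (E := ℝ) (F n) (m₀ := mΩ) μ
          (fun ω => if A (n + 1) ω = A n ω + 1 then (1 : ℝ) else 0)
        =ᵐ[μ] fun ω => (A n ω : ℝ) / ((A n ω : ℝ) + (B n ω : ℝ))) :
    ∀ᵐ ω ∂μ, {n : ℕ | n₀ ≤ n ∧ A n ω = B n ω}.Finite := by
  have hpath : ∀ᵐ ω ∂μ, IsUpRightPath n₀ (A · ω) (B · ω) := hstep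
  have hmart := martingale_polyaHarmonic ha hb hstart hA_adapted hB_adapted hpath hlaw
    isPolyaHarmonic_betaHalf
  filter_upwards [hpath, hmart.ae_bddAbove_range_of_nonneg fun _ _ => betaHalf_nonneg _ _]
    with ω hω hbdd
  exact hω.finite_diag_of_bddAbove (g := fun x y => betaHalf (x - 1) (y - 1))
    (tendsto_betaHalf_diag.comp (tendsto_sub_atTop_nat 1)) hbdd
end
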